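/- For all 𝒜, 𝒝 ⊆ ℕ^ℕ and every partial multivalued function R on Baire space: if c_𝒜 ≤ᶜ_W c_𝒝 × R, then there exists 𝒞 ⊆ ℕ^ℕ with c_𝒞 ≤ᶜ_W R and c_𝒜 ≤ᶜ_W c_𝒝 × c_𝒞. -/
import Mathlib


namespace Weihrauch

/-- Baire space ℕ^ℕ. -/
abbrev Baire : Type := ℕ → ℕ

/-- The interleaving pairing homeomorphism ⟨p,q⟩. -/
def pair (p q : Baire) : Baire := fun n => if n % 2 = 0 then p (n / 2) else q (n / 2)

/-- First component of the interleaving pairing. -/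
def left (z : Baire) : Baire := fun n => z (2 * n)

/-- Second component of the interleaving pairing. -/
def right (z : Baire) : Baire := fun n => z (2 * n + 1)

/-- The sequence np = n,p(0),p(1),… . -/
def cons (n : ℕ) (p : Baire) : Baire := fun m => match m with
  | 0 => n
  | k + 1 => p k

/-- Drop the first entry of a sequence. -/
def tail (z : Baire) : Baire := fun n => z (n + 1)

/-- The constant zero sequence 0^ℕ. -/
def zero : Baire := fun _ => 0

/-- The constant one sequence 1^ℕ. -/
def one : Baire := fun _ => 1

/-- Partial multivalued functions on Baire space. -/
abbrev MV : Type := Baire → Set Baire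

/-- The domain of a partial multivalued function. -/
def dom (P : MV) : Set Baire := {x | (P x).Nonempty}

/-- Continuous Weihrauch reducibility P ≤ᶜ_W Q. -/
def CWle (P Q : MV) : Prop :=
  ∃ H K : Baire → Baire,
    ContinuousOn K (dom P) ∧
    (∀ x ∈ dom P, K x ∈ dom Q) ∧
    ContinuousOn H {z | ∃ x ∈ dom P, ∃ y ∈ Q (K x), z = pair x y} ∧
    (∀ x ∈ dom P, ∀ y ∈ Q (K x), H (pair x y) ∈ P x)

/-- Continuous Weihrauch equivalence P ≡ᶜ_W Q. -/
def CWequiv (P Q : MV) : Prop := CWle P Q ∧ CWle Q P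

/-- The infimum operation (P ⊕ Q)(⟨p,q⟩) = 0P(p) ∪ 1Q(q) for p ∈ dom P, q ∈ dom Q. -/
def oplus (P Q : MV) : MV := fun z =>
  {r | left z ∈ dom P ∧ right z ∈ dom Q ∧
       ((∃ s ∈ P (left z), r = cons 0 s) ∨ (∃ s ∈ Q (right z), r = cons 1 s))}

/-- The coproduct (P ∐ Q)(0p) = 0P(p), (P ∐ Q)(1p) = 1Q(p). -/
def coprod (P Q : MV) : MV := fun z =>
  {r | (z 0 = 0 ∧ ∃ s ∈ P (tail z), r = cons 0 s) ∨
       (z 0 = 1 ∧ ∃ s ∈ Q (tail z), r = cons 1 s)}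

/-- The product (P × Q)(⟨p,q⟩) = {⟨r,s⟩ | r ∈ P(p), s ∈ Q(q)}. -/
def prod (P Q : MV) : MV := fun z =>
  {r | ∃ s ∈ P (left z), ∃ t ∈ Q (right z), r = pair s t}

/-- A fixed finite tupling ⟨p₀,…,p_{n-1}⟩ of n sequences, by interleaving. -/
def ftup (n : ℕ) (f : ℕ → Baire) : Baire := fun m => f (m % n) (m / n)

/-- The i-th projection inverting `ftup n`: `fproj n i (ftup n f) = f i` for i < n. -/
def fproj (n i : ℕ) (z : Baire) : Baire := fun j => z (j * n + i)

/-- The finite parallelization P*, with P*(n⟨p₁,…,pₙ⟩) = {n⟨r₁,…,rₙ⟩ | rᵢ ∈ P(pᵢ)}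
for n ≥ 1 and P*(0p) = {0^ℕ}.  (Note every sequence is of the form `ftup n f`,
since `ftup n (fun i => fproj n i z) = z`.) -/
def fpar (P : MV) : MV := fun z =>
  {r | (z 0 = 0 ∧ r = zero) ∨
       (1 ≤ z 0 ∧ r 0 = z 0 ∧
        ∀ i < z 0, fproj (z 0) i (tail r) ∈ P (fproj (z 0) i (tail z)))}

/-- Countable tupling ⟨p₁,p₂,…⟩ via the pairing bijection ℕ×ℕ→ℕ
(the family is indexed by 0,1,2,…). -/
def ctup (f : ℕ → Baire) : Baire := fun m => f (Nat.unpair m).1 (Nat.unpair m).2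

/-- Projection inverting `ctup`: `cproj i (ctup f) = f i`. -/
def cproj (i : ℕ) (z : Baire) : Baire := fun j => z (Nat.pair i j)

/-- The 1-indexed component pᵢ of a countable tuple z = ⟨p₁,p₂,…⟩ (for i ≥ 1). -/
def comp (z : Baire) (i : ℕ) : Baire := cproj (i - 1) z

/-- LLPO_{n,1}: at most one pair (i,j) with pᵢ(j) ≠ 0 in the domain;
values are the i0^ℕ with 1 ≤ i ≤ n and pᵢ = 0^ℕ. -/
def LLPOn (n : ℕ) : MV := fun z =>
  {r | (∀ i j i' j', 1 ≤ i → 1 ≤ i' → comp z i j ≠ 0 → comp z i' j' ≠ 0 →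
          (i = i' ∧ j = j')) ∧
       ∃ i, 1 ≤ i ∧ i ≤ n ∧ comp z i = zero ∧ r = cons i zero}

/-- LLPO_{∞,m}: at most m pairs (i,j) with pᵢ(j) ≠ 0 in the domain;
values are the i0^ℕ with pᵢ = 0^ℕ. -/
def LLPOinf (m : ℕ) : MV := fun z =>
  {r | (∃ s : Finset (ℕ × ℕ), s.card ≤ m ∧ ∀ i j, 1 ≤ i → comp z i j ≠ 0 → (i, j) ∈ s) ∧
       ∃ i, 1 ≤ i ∧ comp z i = zero ∧ r = cons i zero}

/-- The sequence 0ⁿ10^ℕ. -/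
def zeros1 (n : ℕ) : Baire := fun m => if m = n then 1 else 0

/-- Σ_k^∞LLPO(⟨0^ℕ,p⟩) = LLPO_{∞,2}(p), Σ_k^∞LLPO(⟨0ⁿ10^ℕ,p⟩) = LLPO_{n,1}(p) for n ≥ k. -/
def SigmaLLPO (k : ℕ) : MV := fun z =>
  {r | (left z = zero ∧ r ∈ LLPOinf 2 (right z)) ∨
       (∃ n, k ≤ n ∧ left z = zeros1 n ∧ r ∈ LLPOn n (right z))}

/-- c_𝒜, with dom(c_𝒜) = {0^ℕ} and c_𝒜(0^ℕ) = 𝒜. -/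
def cA (A : Set Baire) : MV := fun z => {r | z = zero ∧ r ∈ A}

/-- d_𝒜, with dom(d_𝒜) = 𝒜 and d_𝒜(x) = {1^ℕ} for x ∈ 𝒜. -/
def dA (A : Set Baire) : MV := fun z => {r | z ∈ A ∧ r = one}

/-- Continuous Medvedev reducibility 𝒜 ≤ᶜ_M 𝒝. -/
def CMle (A B : Set Baire) : Prop :=
  ∃ H : Baire → Baire, ContinuousOn H B ∧ ∀ x ∈ B, H x ∈ A

/-- The Medvedev sum 𝒜 + 𝒝 = 0𝒜 ∪ 1𝒝. -/
def msum (A B : Set Baire) : Set Baire := (cons 0 '' A) ∪ (cons 1 '' B)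

/-- The Medvedev product 𝒜 × 𝒝 = {⟨p,q⟩ | p ∈ 𝒜, q ∈ 𝒝}. -/
def mprod (A B : Set Baire) : Set Baire := {z | ∃ p ∈ A, ∃ q ∈ B, z = pair p q}

end Weihrauch


open Weihrauch

private lemma left_pair (p q : Baire) : left (pair p q) = p := by
  funext n; simp [left, pair, Nat.mul_div_cancel_left, Nat.mul_mod_right]

private lemma right_pair (p q : Baire) : right (pair p q) = q := by
  funext n
  have h1 : (2 * n + 1) % 2 = 1 := by omega
  have h2 : (2 * n + 1) / 2 = n := by omega
  simp [right, pair, h1, h2]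

private lemma left_zero : left zero = zero := rfl
private lemma right_zero : right zero = zero := rfl

private lemma mem_dom_cA {A : Set Baire} {x : Baire} (hx : x ∈ dom (cA A)) :
    x = zero := by
  obtain ⟨r, hr, _⟩ := hx
  exact hr

/-- If c_𝒜 ≤ᶜ_W c_𝒝 × R, then there is 𝒞 with c_𝒞 ≤ᶜ_W R and
c_𝒜 ≤ᶜ_W c_𝒝 × c_𝒞. -/
theorem cA_prod_factor (A B : Set Baire) (R : MV)
    (h : CWle (cA A) (prod (cA B) R)) :
    ∃ C : Set Baire, CWle (cA C) R ∧ CWle (cA A) (prod (cA B) (cA C)) := by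
  obtain ⟨H, K, hKcont, hKdom, hHcont, hH⟩ := h
  by_cases hA : A.Nonempty
  · obtain ⟨a, ha⟩ := hA
    have hz : zero ∈ dom (cA A) := ⟨a, rfl, ha⟩
    obtain ⟨r, s, hs, t, ht, hr⟩ := hKdom zero hz
    obtain ⟨hl, hsB⟩ := hs
    set C := R (right (K zero)) with hC
    refine ⟨C, ⟨right, fun _ => right (K zero), continuousOn_const,
      fun x _ => ⟨t, ht⟩, Continuous.continuousOn
        (continuous_pi fun n => continuous_apply _), ?_⟩, ?_⟩
    · intro x hx y hy
      rw [right_pair]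
      exact ⟨mem_dom_cA hx, hy⟩
    · -- key fact: prod (cA B) (cA C) (zero) = prod (cA B) R (K zero)
      have key : ∀ y, y ∈ prod (cA B) (cA C) zero → y ∈ prod (cA B) R (K zero) := by
        rintro y ⟨s', ⟨_, hs'B⟩, t', ⟨_, ht'C⟩, rfl⟩
        exact ⟨s', ⟨hl, hs'B⟩, t', ht'C, rfl⟩
      refine ⟨H, fun _ => zero, continuousOn_const, ?_, ?_, ?_⟩
      · intro x _
        exact ⟨pair s t, s, ⟨left_zero, hsB⟩, t, ⟨right_zero, ht⟩, rfl⟩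
      · refine hHcont.mono ?_
        rintro z ⟨x, hx, y, hy, rfl⟩
        have hxz := mem_dom_cA hx
        subst hxz
        exact ⟨zero, hz, y, key y hy, rfl⟩
      · intro x hx y hy
        have hxz := mem_dom_cA hx
        subst hxz
        exact hH zero hz y (key y hy)
  · have hdom0 : dom (cA (∅ : Set Baire)) = ∅ := by
      ext x
      simp [dom, cA, Set.Nonempty]
    have hdomA : dom (cA A) = ∅ := by
      ext x
      simp only [dom, cA, Set.Nonempty, Set.mem_setOf_eq, Set.mem_empty_iff_false,
        iff_false, not_exists]
      rintro r ⟨_, hr⟩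
      exact hA ⟨r, hr⟩
    refine ⟨∅, ⟨id, id, ?_, ?_, ?_, ?_⟩, ⟨id, id, ?_, ?_, ?_, ?_⟩⟩
    · rw [hdom0]; exact continuousOn_empty _
    · intro x hx; rw [hdom0] at hx; exact absurd hx (Set.notMem_empty x)
    · have he : {z | ∃ x ∈ dom (cA (∅ : Set Baire)), ∃ y ∈ R (id x), z = pair x y} = ∅ := by
        rw [hdom0]; simp
      rw [he]; exact continuousOn_empty _
    · intro x hx; rw [hdom0] at hx; exact absurd hx (Set.notMem_empty x)
    · rw [hdomA]; exact continuousOn_empty _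
    · intro x hx; rw [hdomA] at hx; exact absurd hx (Set.notMem_empty x)
    · have he : {z | ∃ x ∈ dom (cA A), ∃ y ∈ prod (cA B) (cA (∅ : Set Baire)) (id x),
          z = pair x y} = ∅ := by
        rw [hdomA]; simp
      rw [he]; exact continuousOn_empty _
    · intro x hx; rw [hdomA] at hx; exact absurd hx (Set.notMem_empty x)
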